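/- Let C be a Delsarte code in the space of m×n matrices over 𝔽_q. Then P(C^⊥) = P(C)*, i.e. for every X ∈ Σ(E), ρ_{C^⊥}(X) = ρ_C(X^⊥) + m·dim X − ρ_C(E). -/

import Mathlib

set_option linter.unusedSectionVars false

open Module Matrix

variable {F : Type*} [Field F] [Fintype F] {n : ℕ}

/-- The orthogonal complement of a subspace of `𝔽_q^n` with respect to the standard dot product. -/
def perp (X : Submodule F (Fin n → F)) : Submodule F (Fin n → F) where
  carrier := {x | ∀ y ∈ X, dotProduct x y = 0}
  add_mem' := fun {a b} ha hb y hy => by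
    rw [Set.mem_setOf_eq] at *
    rw [add_dotProduct, ha y hy, hb y hy, add_zero]
  zero_mem' := fun y hy => zero_dotProduct y
  smul_mem' := fun c a ha y hy => by
    rw [Set.mem_setOf_eq] at *
    rw [smul_dotProduct, ha y hy, smul_zero]

/-- The dual rank function `ρ*(X) = ρ(X^⊥) + m·dim X − ρ(E)`. -/
noncomputable def dualRho (m : ℕ) (rho : Submodule F (Fin n → F) → ℤ) (X : Submodule F (Fin n → F)) : ℤ :=
  rho (perp X) + (m : ℤ) * (finrank F X : ℤ) - rho ⊤

/-- The nullity function `ν(X) = m·dim X − ρ(X)`. -/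
noncomputable def nullity (m : ℕ) (rho : Submodule F (Fin n → F) → ℤ) (X : Submodule F (Fin n → F)) : ℤ :=
  (m : ℤ) * (finrank F X : ℤ) - rho X

/-- The conullity function `ν*(X) = ρ(E) − ρ(X^⊥)`. -/
def coNull (rho : Submodule F (Fin n → F) → ℤ) (X : Submodule F (Fin n → F)) : ℤ :=
  rho ⊤ - rho (perp X)

/-- The `r`-th generalized weight `d_r = min{dim X : ν*(X) ≥ r}`. -/
noncomputable def genW (rho : Submodule F (Fin n → F) → ℤ) (r : ℤ) : ℕ :=
  sInf {d : ℕ | ∃ X : Submodule F (Fin n → F), finrank F X = d ∧ r ≤ coNull rho X}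

/-- `h(x) = max{ν(X) : dim X = x}`. -/
noncomputable def hFun (m : ℕ) (rho : Submodule F (Fin n → F) → ℤ) (x : ℕ) : ℤ :=
  sSup {v : ℤ | ∃ X : Submodule F (Fin n → F), finrank F X = x ∧ v = nullity m rho X}

/-- `h*(x) = max{ν*(X) : dim X = x}`. -/
noncomputable def hStar (rho : Submodule F (Fin n → F) → ℤ) (x : ℕ) : ℤ :=
  sSup {v : ℤ | ∃ X : Submodule F (Fin n → F), finrank F X = x ∧ v = coNull rho X}

/-- A `(q,m)`-polymatroid on `E = 𝔽_q^n`. -/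
structure QMPolymatroid (F : Type*) [Field F] [Fintype F] (n m : ℕ) where
  rho : Submodule F (Fin n → F) → ℤ
  rho_nonneg : ∀ X, 0 ≤ rho X
  rho_le : ∀ X, rho X ≤ (m : ℤ) * (finrank F X : ℤ)
  rho_mono : ∀ ⦃X Y⦄, X ≤ Y → rho X ≤ rho Y
  rho_submodular : ∀ X Y, rho (X ⊔ Y) + rho (X ⊓ Y) ≤ rho X + rho Y

/-- A `(q,m)`-demi-polymatroid on `E = 𝔽_q^n`. -/
structure QMDemiPolymatroid (F : Type*) [Field F] [Fintype F] (n m : ℕ) where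
  rho : Submodule F (Fin n → F) → ℤ
  rho_nonneg : ∀ X, 0 ≤ rho X
  rho_le : ∀ X, rho X ≤ (m : ℤ) * (finrank F X : ℤ)
  rho_mono : ∀ ⦃X Y⦄, X ≤ Y → rho X ≤ rho Y
  dual_nonneg : ∀ X, 0 ≤ dualRho m rho X
  dual_le : ∀ X, dualRho m rho X ≤ (m : ℤ) * (finrank F X : ℤ)
  dual_mono : ∀ ⦃X Y⦄, X ≤ Y → dualRho m rho X ≤ dualRho m rho Y

section Codes

variable {m : ℕ}

/-- The row space of a matrix. -/
def rowSpace (A : Matrix (Fin m) (Fin n) F) : Submodule F (Fin n → F) :=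
  Submodule.span F (Set.range A)

theorem rowSpace_le_iff (A : Matrix (Fin m) (Fin n) F) (X : Submodule F (Fin n → F)) :
    rowSpace A ≤ X ↔ ∀ i, A i ∈ X := by
  rw [rowSpace, Submodule.span_le]; exact Set.range_subset_iff

/-- Matrices whose row space is contained in `X`. -/
def supportedOn (m : ℕ) (X : Submodule F (Fin n → F)) :
    Submodule F (Matrix (Fin m) (Fin n) F) where
  carrier := {A | rowSpace A ≤ X}
  add_mem' := fun {A B} hA hB => by
    rw [Set.mem_setOf_eq, rowSpace_le_iff] at *
    exact fun i => X.add_mem (hA i) (hB i)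
  zero_mem' := by
    rw [Set.mem_setOf_eq, rowSpace_le_iff]
    exact fun i => X.zero_mem
  smul_mem' := fun c A hA => by
    rw [Set.mem_setOf_eq, rowSpace_le_iff] at *
    exact fun i => X.smul_mem c (hA i)

/-- `C(X)`: the subspace of a Delsarte code `C` of matrices whose row space lies in `X`. -/
def subcode (C : Submodule F (Matrix (Fin m) (Fin n) F)) (X : Submodule F (Fin n → F)) :
    Submodule F (Matrix (Fin m) (Fin n) F) :=
  C ⊓ supportedOn m X

/-- The rank function `ρ_C(X) = dim C − dim C(X^⊥)` of a Delsarte code. -/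
noncomputable def rhoC (C : Submodule F (Matrix (Fin m) (Fin n) F))
    (X : Submodule F (Fin n → F)) : ℤ :=
  (finrank F C : ℤ) - (finrank F (subcode C (perp X)) : ℤ)

/-- The generalized weight `d_r(C) = min{dim X : dim C(X) ≥ r}` of a Delsarte code. -/
noncomputable def codeWeight (C : Submodule F (Matrix (Fin m) (Fin n) F)) (r : ℤ) : ℕ :=
  sInf {d : ℕ | ∃ X : Submodule F (Fin n → F),
    finrank F X = d ∧ r ≤ (finrank F (subcode C X) : ℤ)}

/-- The trace dual of a Delsarte code. -/
def traceDual (C : Submodule F (Matrix (Fin m) (Fin n) F)) :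
    Submodule F (Matrix (Fin m) (Fin n) F) where
  carrier := {N | ∀ M ∈ C, Matrix.trace (M * Nᵀ) = 0}
  add_mem' := fun {N₁ N₂} h1 h2 M hM => by
    rw [Matrix.transpose_add, Matrix.mul_add, Matrix.trace_add, h1 M hM, h2 M hM, add_zero]
  zero_mem' := fun M hM => by simp
  smul_mem' := fun c N hN M hM => by
    rw [Matrix.transpose_smul, Matrix.mul_smul, Matrix.trace_smul, hN M hM, smul_zero]

/-- The transposed code `Cᵀ = {Mᵗ : M ∈ C}` of a code of square matrices. -/
def transposeCode (C : Submodule F (Matrix (Fin n) (Fin n) F)) :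
    Submodule F (Matrix (Fin n) (Fin n) F) where
  carrier := {A | Aᵀ ∈ C}
  add_mem' := fun {A B} hA hB => by
    rw [Set.mem_setOf_eq, Matrix.transpose_add]; exact C.add_mem hA hB
  zero_mem' := by
    rw [Set.mem_setOf_eq, Matrix.transpose_zero]; exact C.zero_mem
  smul_mem' := fun c A hA => by
    rw [Set.mem_setOf_eq, Matrix.transpose_smul]; exact C.smul_mem c hA

/-- The maximum rank of a matrix in a subspace of matrices. -/
noncomputable def maxrank (A : Submodule F (Matrix (Fin m) (Fin n) F)) : ℕ :=
  sSup {r : ℕ | ∃ M ∈ A, M.rank = r}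

/-- An optimal anticode: a subspace `𝒜` of `𝕄` with `dim 𝒜 = m · maxrank 𝒜`. -/
def IsOptimalAnticode (A : Submodule F (Matrix (Fin m) (Fin n) F)) : Prop :=
  finrank F A = m * maxrank A

/-- Ravagnani's generalized weight `a_r(C)`. -/
noncomputable def aWeight (C : Submodule F (Matrix (Fin m) (Fin n) F)) (r : ℤ) : ℕ :=
  (sInf {d : ℕ | ∃ A : Submodule F (Matrix (Fin m) (Fin n) F),
    IsOptimalAnticode A ∧ finrank F A = d ∧ r ≤ (finrank F (A ⊓ C : Submodule F _) : ℤ)}) / m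

end Codes

/-!
The dot product and the trace form `(M, N) ↦ tr(M Nᵀ)` are nondegenerate symmetric forms whose
orthogonal complements are `perp` and `traceDual`. The key identity is
`traceDual (supportedOn m X) = supportedOn m (perp X)` (the inclusion `⊇` is immediate and both
sides have dimension `m (n - dim X)`), so `C^⊥(X^⊥) = (C + 𝕄(X))^⊥`. Counting dimensions,
`ρ_{C^⊥}(X) = m·dim X - dim C(X)`, and the right-hand side reduces to the same value because
`X^⊥⊥ = X` and `C(0) = 0`.
-/

open LinearMap (BilinForm)

namespace LinearMap.BilinForm

theorem orthogonal_sup {R M : Type*} [CommSemiring R] [AddCommMonoid M] [Module R M]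
    (B : BilinForm R M) (N₁ N₂ : Submodule R M) :
    B.orthogonal (N₁ ⊔ N₂) = B.orthogonal N₁ ⊓ B.orthogonal N₂ := by
  refine le_antisymm (le_inf (orthogonal_le le_sup_left) (orthogonal_le le_sup_right)) ?_
  rintro x ⟨hx₁, hx₂⟩ y hy
  obtain ⟨y₁, hy₁, y₂, hy₂, rfl⟩ := Submodule.mem_sup.mp hy
  rw [map_add₂, hx₁ y₁ hy₁, hx₂ y₂ hy₂, add_zero]

theorem finrank_add_finrank_orthogonal_of_nondegenerate {K V : Type*} [Field K]
    [AddCommGroup V] [Module K V] [FiniteDimensional K V] {B : BilinForm K V}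
    (hB : B.Nondegenerate) (W : Submodule K V) :
    finrank K W + finrank K (B.orthogonal W) = finrank K V := by
  rw [finrank_add_finrank_orthogonal', hB.ker_eq_bot, inf_bot_eq, finrank_bot, add_zero]

end LinearMap.BilinForm

open LinearMap.BilinForm

section DotProduct

variable {R ι : Type*} [CommRing R] [Fintype ι]

theorem dotProductBilin_isRefl : IsRefl (dotProductBilin R R : BilinForm R (ι → R)) := by
  intro x y h
  rwa [dotProductBilin_apply_apply, dotProduct_comm] at h

theorem dotProductBilin_nondegenerate :
    Nondegenerate (dotProductBilin R R : BilinForm R (ι → R)) :=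
  LinearMap.IsRefl.nondegenerate_iff_separatingLeft
    (B := (dotProductBilin R R : BilinForm R (ι → R))) dotProductBilin_isRefl |>.mpr
    fun x hx => dotProduct_eq_zero x hx

end DotProduct

section Perp

variable {F : Type*} [Field F] {n : ℕ}

theorem perp_eq_orthogonal (X : Submodule F (Fin n → F)) :
    perp X = orthogonal (dotProductBilin F F) X := by
  ext x
  simp only [mem_orthogonal_iff, dotProductBilin_apply_apply, dotProduct_comm _ x]
  rfl

theorem finrank_perp_add_finrank (X : Submodule F (Fin n → F)) :
    finrank F (perp X) + finrank F X = n := by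
  rw [perp_eq_orthogonal, add_comm,
    finrank_add_finrank_orthogonal_of_nondegenerate dotProductBilin_nondegenerate,
    finrank_fin_fun]

theorem perp_perp (X : Submodule F (Fin n → F)) : perp (perp X) = X := by
  simp only [perp_eq_orthogonal]
  exact orthogonal_orthogonal dotProductBilin_nondegenerate dotProductBilin_isRefl X

theorem perp_top : perp (⊤ : Submodule F (Fin n → F)) = ⊥ := by
  rw [perp_eq_orthogonal, orthogonal_top_eq_ker dotProductBilin_isRefl,
    dotProductBilin_nondegenerate.ker_eq_bot]

end Perp

namespace Matrix

variable (R : Type*) [CommRing R] (m n : Type*) [Fintype m] [Fintype n]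

def traceForm : BilinForm R (Matrix m n R) :=
  LinearMap.mk₂ R (fun M N => trace (M * Nᵀ))
    (fun _ _ _ => by rw [Matrix.add_mul, trace_add])
    (fun _ _ _ => by rw [Matrix.smul_mul, trace_smul])
    (fun _ _ _ => by rw [transpose_add, Matrix.mul_add, trace_add])
    (fun _ _ _ => by rw [transpose_smul, Matrix.mul_smul, trace_smul])

variable {R m n}

theorem traceForm_apply (M N : Matrix m n R) : traceForm R m n M N = trace (M * Nᵀ) := rfl

theorem traceForm_isRefl : (traceForm R m n).IsRefl := by
  intro M N h
  rwa [traceForm_apply, ← trace_transpose, transpose_mul, transpose_transpose] at h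

theorem traceForm_nondegenerate : (traceForm R m n).Nondegenerate := by
  refine (LinearMap.IsRefl.nondegenerate_iff_separatingLeft (B := traceForm R m n)
    traceForm_isRefl).mpr fun M hM => ?_
  refine ext_iff_trace_mul_right.mpr fun N => ?_
  simpa [traceForm_apply] using hM Nᵀ

end Matrix

section TraceDual

variable {F : Type*} [Field F] {m n : ℕ}

theorem traceDual_eq_orthogonal (C : Submodule F (Matrix (Fin m) (Fin n) F)) :
    traceDual C = (traceForm F (Fin m) (Fin n)).orthogonal C := rfl

theorem finrank_traceDual_add_finrank (C : Submodule F (Matrix (Fin m) (Fin n) F)) :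
    finrank F (traceDual C) + finrank F C = m * n := by
  rw [traceDual_eq_orthogonal, add_comm,
    finrank_add_finrank_orthogonal_of_nondegenerate traceForm_nondegenerate, finrank_matrix,
    Fintype.card_fin, Fintype.card_fin, finrank_self, mul_one]

theorem traceDual_sup (C D : Submodule F (Matrix (Fin m) (Fin n) F)) :
    traceDual (C ⊔ D) = traceDual C ⊓ traceDual D :=
  orthogonal_sup (traceForm F (Fin m) (Fin n)) C D

end TraceDual

section SupportedOn

variable {F : Type*} [Field F] [Fintype F] {m n : ℕ}

theorem mem_supportedOn {X : Submodule F (Fin n → F)} {A : Matrix (Fin m) (Fin n) F} :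
    A ∈ supportedOn m X ↔ ∀ i, A i ∈ X :=
  rowSpace_le_iff A X

variable (m) in
def supportedOnEquivPi (X : Submodule F (Fin n → F)) :
    supportedOn m X ≃ₗ[F] (Fin m → X) where
  toFun A i := ⟨A.1 i, mem_supportedOn.mp A.2 i⟩
  map_add' _ _ := rfl
  map_smul' _ _ := rfl
  invFun f := ⟨Matrix.of fun i => f i, mem_supportedOn.mpr fun i => (f i).2⟩
  left_inv _ := rfl
  right_inv _ := rfl

theorem finrank_supportedOn (X : Submodule F (Fin n → F)) :
    finrank F (supportedOn m X) = m * finrank F X := by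
  rw [(supportedOnEquivPi m X).finrank_eq, finrank_pi_fintype, Finset.sum_const,
    Finset.card_univ, Fintype.card_fin, smul_eq_mul]

theorem supportedOn_bot : supportedOn m (⊥ : Submodule F (Fin n → F)) = ⊥ := by
  ext A
  simp only [mem_supportedOn, Submodule.mem_bot]
  exact ⟨funext, congrFun⟩

theorem supportedOn_perp_le_traceDual (X : Submodule F (Fin n → F)) :
    supportedOn m (perp X) ≤ traceDual (supportedOn m X) := by
  intro N hN M hM
  simp only [trace, diag, mul_apply', transpose_apply]
  exact Finset.sum_eq_zero fun i _ =>
    (dotProduct_comm _ _).trans (mem_supportedOn.mp hN i _ (mem_supportedOn.mp hM i))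

theorem traceDual_supportedOn (X : Submodule F (Fin n → F)) :
    traceDual (supportedOn m X) = supportedOn m (perp X) := by
  refine (Submodule.eq_of_le_of_finrank_eq (supportedOn_perp_le_traceDual X) ?_).symm
  have hdual := finrank_traceDual_add_finrank (supportedOn m X)
  have hperp : m * finrank F (perp X) + m * finrank F X = m * n := by
    rw [← Nat.mul_add, finrank_perp_add_finrank]
  rw [finrank_supportedOn] at hdual ⊢
  omega

end SupportedOn

/-- `P(C^⊥) = P(C)*`, i.e. `ρ_{C^⊥}(X) = ρ_C(X^⊥) + m·dim X − ρ_C(E)`. -/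
theorem traceDual_rho_eq_dualRho {F : Type*} [Field F] [Fintype F] {n m : ℕ}
    (C : Submodule F (Matrix (Fin m) (Fin n) F)) (X : Submodule F (Fin n → F)) :
    rhoC (traceDual C) X = rhoC C (perp X) + (m : ℤ) * (finrank F X : ℤ) - rhoC C ⊤ := by
  have hdualSub : subcode (traceDual C) (perp X) = traceDual (C ⊔ supportedOn m X) := by
    rw [traceDual_sup, traceDual_supportedOn]; rfl
  have hsub : subcode C (perp (perp X)) = C ⊓ supportedOn m X := by
    rw [perp_perp]; rfl
  have hsubTop : subcode C (perp ⊤) = ⊥ := by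
    rw [perp_top, subcode, supportedOn_bot, inf_bot_eq]
  have hC := finrank_traceDual_add_finrank C
  have hCX := finrank_traceDual_add_finrank (C ⊔ supportedOn m X)
  have hmod := Submodule.finrank_sup_add_finrank_inf_eq C (supportedOn m X)
  rw [finrank_supportedOn] at hmod
  rw [rhoC, rhoC, rhoC, hdualSub, hsub, hsubTop, finrank_bot]
  omega
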